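/- arXiv:1905.05788 — 6 statements merged into one kernel-verified Lean document; each statement's English description precedes it below -/
import Mathlib

section
/- Let Y = X ∪ {y} with y ∉ X, and let x ∈ X. If y is not in the ~_{s,Y}-equivalence class of x (components computed in Y), then the ~_{s,X}-class of x equals the ~_{s,Y}-class of x as subsets; in particular, the inclusion [x]_{s,X} ⊆ [x]_{s,Y} is a bijection. -/
open scoped Classical

/-- One "short hop" of length at most `s` between points of `Z`. -/
def vrStep (n : ℕ) (Z : Finset (EuclideanSpace ℝ (Fin n))) (s : ℝ)
    (a b : EuclideanSpace ℝ (Fin n)) : Prop :=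
  a ∈ Z ∧ b ∈ Z ∧ dist a b ≤ s

/-- `x ~_s y` : there is a chain of points of `Z` from `x` to `y` with hops `≤ s`. -/
def vrRel (n : ℕ) (Z : Finset (EuclideanSpace ℝ (Fin n))) (s : ℝ)
    (x y : EuclideanSpace ℝ (Fin n)) : Prop :=
  Relation.ReflTransGen (vrStep n Z s) x y

/-- The equivalence class (path component of the Vietoris–Rips complex) of `x` in `Z`. -/
def vrCls (n : ℕ) (Z : Finset (EuclideanSpace ℝ (Fin n))) (s : ℝ)
    (x : EuclideanSpace ℝ (Fin n)) : Set (EuclideanSpace ℝ (Fin n)) :=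
  {z | z ∈ Z ∧ vrRel n Z s x z}

/-- The set of pairwise distances (phase change numbers) of `X`. -/
def distSet (n : ℕ) (X : Finset (EuclideanSpace ℝ (Fin n))) : Set ℝ :=
  {d | ∃ a ∈ X, ∃ b ∈ X, dist a b = d}

theorem stmt9 (n : ℕ) (X : Finset (EuclideanSpace ℝ (Fin n)))
    (y : EuclideanSpace ℝ (Fin n)) (hy : y ∉ X) (s : ℝ)
    (x : EuclideanSpace ℝ (Fin n)) (hx : x ∈ X)
    (h : y ∉ vrCls n (insert y X) s x) :
    vrCls n X s x = vrCls n (insert y X) s x := by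
  ext z
  constructor
  · rintro ⟨hzX, hrel⟩
    refine ⟨Finset.mem_insert_of_mem hzX, ?_⟩
    exact Relation.ReflTransGen.mono
      (show ∀ a b, vrStep n X s a b → vrStep n (insert y X) s a b from fun a b ⟨ha, hb, hd⟩ =>
        ⟨Finset.mem_insert_of_mem ha, Finset.mem_insert_of_mem hb, hd⟩) _ _ hrel
  · rintro ⟨hzY, hrel⟩
    induction hrel with
    | refl => exact ⟨hx, Relation.ReflTransGen.refl⟩
    | @tail b c hxb hbc ih =>
      obtain ⟨hbY, hcY, hd⟩ := hbc
      have hcne : c ≠ y := by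
        rintro rfl
        exact h ⟨hcY, hxb.tail ⟨hbY, hcY, hd⟩⟩
      have hbne : b ≠ y := by
        rintro rfl
        exact h ⟨hbY, hxb⟩
      have hbX : b ∈ X := (Finset.mem_insert.1 hbY).resolve_left hbne
      have hcX : c ∈ X := (Finset.mem_insert.1 hcY).resolve_left hcne
      exact ⟨hcX, (ih hbY).2.tail ⟨hbX, hcX, hd⟩⟩
end

section
/- Let Y = X ∪ {y}, s ≤ t, x ∈ X, and suppose y ∉ [x]_{t,Y}. If [x]_{s,X} = [x]_{t,X} (as subsets of X), then [x]_{s,Y} = [x]_{t,Y} (as subsets of Y). -/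
open scoped Classical

section

variable {n : ℕ} {X Z W : Finset (EuclideanSpace ℝ (Fin n))} {s t : ℝ}
  {x y z : EuclideanSpace ℝ (Fin n)}

lemma vrCls_mono_radius (hst : s ≤ t) : vrCls n Z s x ⊆ vrCls n Z t x :=
  fun _ ⟨hz, hrel⟩ ↦ ⟨hz,
    Relation.ReflTransGen.mono (fun _ _ ⟨ha, hb, hd⟩ ↦ ⟨ha, hb, hd.trans hst⟩) _ _ hrel⟩

lemma vrCls_mono_set (hZW : Z ⊆ W) : vrCls n Z s x ⊆ vrCls n W s x :=
  fun _ ⟨hz, hrel⟩ ↦ ⟨hZW hz,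
    Relation.ReflTransGen.mono (fun _ _ ⟨ha, hb, hd⟩ ↦ ⟨hZW ha, hZW hb, hd⟩) _ _ hrel⟩

lemma mem_of_vrRel_insert (hyt : y ∉ vrCls n (insert y X) t x) (hz : z ∈ insert y X)
    (hrel : vrRel n (insert y X) t x z) : z ∈ X :=
  Finset.mem_of_mem_insert_of_ne hz fun hzy ↦ hyt (by subst hzy; exact ⟨hz, hrel⟩)

lemma vrRel_of_vrRel_insert (hyt : y ∉ vrCls n (insert y X) t x)
    (hrel : vrRel n (insert y X) t x z) : vrRel n X t x z := by
  induction hrel with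
  | refl => exact .refl
  | @tail a b hxa hab ih =>
    obtain ⟨ha, hb, hd⟩ := hab
    have hxb : vrRel n (insert y X) t x b := hxa.tail ⟨ha, hb, hd⟩
    exact ih.tail ⟨mem_of_vrRel_insert hyt ha hxa, mem_of_vrRel_insert hyt hb hxb, hd⟩

lemma vrCls_insert_subset_of_notMem (hyt : y ∉ vrCls n (insert y X) t x) :
    vrCls n (insert y X) t x ⊆ vrCls n X t x :=
  fun _ ⟨hz, hrel⟩ ↦ ⟨mem_of_vrRel_insert hyt hz hrel, vrRel_of_vrRel_insert hyt hrel⟩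

end

theorem stmt10_general (n : ℕ) (X : Finset (EuclideanSpace ℝ (Fin n)))
    (y : EuclideanSpace ℝ (Fin n)) (s t : ℝ) (hst : s ≤ t)
    (x : EuclideanSpace ℝ (Fin n))
    (hyt : y ∉ vrCls n (insert y X) t x)
    (h : vrCls n X s x = vrCls n X t x) :
    vrCls n (insert y X) s x = vrCls n (insert y X) t x := by
  refine (vrCls_mono_radius hst).antisymm ?_
  calc vrCls n (insert y X) t x ⊆ vrCls n X t x := vrCls_insert_subset_of_notMem hyt
    _ = vrCls n X s x := h.symm
    _ ⊆ vrCls n (insert y X) s x := vrCls_mono_set (Finset.subset_insert y X)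

theorem stmt10 (n : ℕ) (X : Finset (EuclideanSpace ℝ (Fin n)))
    (y : EuclideanSpace ℝ (Fin n)) (hy : y ∉ X) (s t : ℝ) (hst : s ≤ t)
    (x : EuclideanSpace ℝ (Fin n)) (hx : x ∈ X)
    (hyt : y ∉ vrCls n (insert y X) t x)
    (h : vrCls n X s x = vrCls n X t x) :
    vrCls n (insert y X) s x = vrCls n (insert y X) t x :=
  stmt10_general n X y s t hst x hyt h
end

section
/- Let 0 = s₀ < s₁ < ... < s_k be the list of distinct pairwise distances among points of X, let y satisfy d(y, x₀) < r for some x₀ ∈ X, where r < s_{i+1} − s_i for all i. If s_i ≤ s < s_{i+1} − r for some i ≥ 1, then every x ∈ X with y ∈ [x]_{s,Y} satisfies [x]_{s,X} = [x₀]_{s,X}; that is, the full subcomplex V_s(X)(y) on vertices x with [x]_{s,Y} = [y]_{s,Y} is connected. -/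
open scoped Classical

/-- Lemma 11(1): if `s_i ≤ s < s_{i+1} - r` for consecutive positive phase change
numbers of `X`, and `d(y,x₀) < r` with `r` smaller than all gaps between
consecutive phase change numbers, then the full subcomplex `V_s(X)(y)` is
connected: every `x ∈ X` whose component in `Y = X ∪ {y}` contains `y`
satisfies `[x]_{s,X} = [x₀]_{s,X}`. -/
theorem stmt12 (n : ℕ) (X : Finset (EuclideanSpace ℝ (Fin n)))
    (y x₀ : EuclideanSpace ℝ (Fin n)) (hy : y ∉ X) (hx₀ : x₀ ∈ X)
    (r s : ℝ) (hr : 0 < r) (hyx₀ : dist y x₀ < r)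
    (hgaps : ∀ d₁ ∈ distSet n X, ∀ d₂ ∈ distSet n X, d₁ < d₂ →
      (∀ d ∈ distSet n X, ¬(d₁ < d ∧ d < d₂)) → r < d₂ - d₁)
    (si si1 : ℝ) (hsi : si ∈ distSet n X) (hsi1 : si1 ∈ distSet n X)
    (hsipos : 0 < si) (hlt : si < si1)
    (hconsec : ∀ d ∈ distSet n X, ¬(si < d ∧ d < si1))
    (hs1 : si ≤ s) (hs2 : s < si1 - r)
    (x : EuclideanSpace ℝ (Fin n)) (hx : x ∈ X)
    (hxy : y ∈ vrCls n (insert y X) s x) :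
    vrCls n X s x = vrCls n X s x₀ := by

  obtain ⟨-, hrel⟩ := hxy
  -- key: any point of X within s of y is within s of x₀
  have hkey : ∀ a ∈ X, dist y a ≤ s → dist a x₀ ≤ s := by
    intro a ha hya
    have hdmem : dist a x₀ ∈ distSet n X := ⟨a, ha, x₀, hx₀, rfl⟩
    have hlt1 : dist a x₀ < si1 := by
      have := dist_triangle a y x₀
      have h1 : dist a y = dist y a := dist_comm a y
      have h2 : dist y x₀ < r := hyx₀
      linarith
    have := hconsec _ hdmem
    have : dist a x₀ ≤ si := by
      by_contra h
      exact this ⟨lt_of_not_ge h, hlt1⟩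
    linarith
  -- map chain in Y = insert y X to chain in X, sending y to x₀
  have hmap : ∀ a b, vrRel n (insert y X) s a b →
      vrRel n X s (if a = y then x₀ else a) (if b = y then x₀ else b) := by
    intro a b hab
    induction hab with
    | refl => exact Relation.ReflTransGen.refl
    | tail _ hstep ih =>
      rename_i c d _
      obtain ⟨hc, hd, hcd⟩ := hstep
      by_cases hcy : c = y
      · by_cases hdy : d = y
        · simpa [hcy, hdy] using ih
        · have hdX : d ∈ X := by
            rcases Finset.mem_insert.mp hd with h | h
            · exact absurd h hdy
            · exact h
          have : dist d x₀ ≤ s := hkey d hdX (by rw [← hcy]; exact hcd)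
          refine ih.tail ?_
          simp only [hcy, if_pos rfl, if_neg hdy]
          exact ⟨hx₀, hdX, by rw [dist_comm]; exact this⟩
      · have hcX : c ∈ X := by
          rcases Finset.mem_insert.mp hc with h | h
          · exact absurd h hcy
          · exact h
        by_cases hdy : d = y
        · have : dist c x₀ ≤ s := hkey c hcX (by rw [dist_comm, ← hdy]; exact hcd)
          refine ih.tail ?_
          simp only [hdy, if_pos rfl, if_neg hcy]
          exact ⟨hcX, hx₀, this⟩
        · have hdX : d ∈ X := by
            rcases Finset.mem_insert.mp hd with h | h
            · exact absurd h hdy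
            · exact h
          refine ih.tail ?_
          simp only [if_neg hcy, if_neg hdy]
          exact ⟨hcX, hdX, hcd⟩
  have hxney : x ≠ y := fun h => hy (h ▸ hx)
  have hxx₀ : vrRel n X s x x₀ := by
    have := hmap x y hrel
    simpa [hxney] using this
  -- symmetry of vrRel on X
  have hsymm : ∀ a b, vrRel n X s a b → vrRel n X s b a := by
    intro a b hab
    refine (@Relation.ReflTransGen.stdSymm _ (vrStep n X s) ⟨?_⟩).symm _ _ hab
    intro u v ⟨hu, hv, huv⟩
    exact ⟨hv, hu, by rwa [dist_comm]⟩
  ext z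
  simp only [vrCls, Set.mem_setOf_eq]
  constructor
  · rintro ⟨hz, hrz⟩
    exact ⟨hz, (hsymm x x₀ hxx₀).trans hrz⟩
  · rintro ⟨hz, hrz⟩
    exact ⟨hz, hxx₀.trans hrz⟩
end

section
/- Under the same hypotheses (s_i ≤ s < s_{i+1} − r for some i ≥ 1, d(y,x₀) < r with r smaller than all gaps between consecutive phase change numbers of X), the induced map π₀V_s(X) → π₀V_s(Y) sending [x]_{s,X} to [x]_{s,Y} is a bijection. -/
open scoped Classical

lemma vrStep_symm' {n Z s a b} (h : vrStep n Z s a b) : vrStep n Z s b a :=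
  ⟨h.2.1, h.1, by rw [dist_comm]; exact h.2.2⟩

lemma vrRel_symm {n Z s a b} (h : vrRel n Z s a b) : vrRel n Z s b a :=
  by
    haveI : Std.Symm (vrStep n Z s) := ⟨fun _ _ hs => vrStep_symm' hs⟩
    exact Std.Symm.symm (r := Relation.ReflTransGen (vrStep n Z s)) _ _ h

lemma vrRel_mono {n} {Z Z' : Finset (EuclideanSpace ℝ (Fin n))} {s a b}
    (hZZ : Z ⊆ Z') (h : vrRel n Z s a b) : vrRel n Z' s a b :=
  Relation.ReflTransGen.mono (p := vrStep n Z' s)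
    (fun _ _ hs => (⟨hZZ hs.1, hZZ hs.2.1, hs.2.2⟩ : vrStep n Z' s _ _)) _ _ h

lemma vrCls_eq_iff {n Z s x₁ x₂} (h₁ : x₁ ∈ Z) (h₂ : x₂ ∈ Z) :
    vrCls n Z s x₁ = vrCls n Z s x₂ ↔ vrRel n Z s x₁ x₂ := by
  constructor
  · intro h
    have : x₂ ∈ vrCls n Z s x₂ := ⟨h₂, Relation.ReflTransGen.refl⟩
    rw [← h] at this
    exact this.2
  · intro h
    ext z
    constructor
    · rintro ⟨hz, hrel⟩
      exact ⟨hz, (vrRel_symm h).trans hrel⟩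
    · rintro ⟨hz, hrel⟩
      exact ⟨hz, h.trans hrel⟩

/-- Lemma 11(2): under the same hypotheses, `π₀V_s(X) → π₀V_s(Y)` is a bijection. -/
theorem stmt13 (n : ℕ) (X : Finset (EuclideanSpace ℝ (Fin n)))
    (y x₀ : EuclideanSpace ℝ (Fin n)) (hy : y ∉ X) (hx₀ : x₀ ∈ X)
    (r s : ℝ) (hr : 0 < r) (hyx₀ : dist y x₀ < r)
    (hgaps : ∀ d₁ ∈ distSet n X, ∀ d₂ ∈ distSet n X, d₁ < d₂ →
      (∀ d ∈ distSet n X, ¬(d₁ < d ∧ d < d₂)) → r < d₂ - d₁)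
    (si si1 : ℝ) (hsi : si ∈ distSet n X) (hsi1 : si1 ∈ distSet n X)
    (hsipos : 0 < si) (hlt : si < si1)
    (hconsec : ∀ d ∈ distSet n X, ¬(si < d ∧ d < si1))
    (hs1 : si ≤ s) (hs2 : s < si1 - r) :
    (∀ x₁ ∈ X, ∀ x₂ ∈ X,
        (vrCls n (insert y X) s x₁ = vrCls n (insert y X) s x₂ ↔
          vrCls n X s x₁ = vrCls n X s x₂)) ∧
    (∀ z ∈ insert y X, ∃ x ∈ X,
        vrCls n (insert y X) s z = vrCls n (insert y X) s x) := by
  set Y := insert y X with hY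
  -- r < s : via the minimal positive distance
  have hrs : r < s := by
    set D : Finset ℝ := ((X ×ˢ X).image (fun p => dist p.1 p.2)).filter (fun d => 0 < d) with hD
    have hDdist : ∀ d ∈ D, d ∈ distSet n X := by
      intro d hd
      rw [hD, Finset.mem_filter, Finset.mem_image] at hd
      obtain ⟨⟨p, hp, hpd⟩, _⟩ := hd
      rw [Finset.mem_product] at hp
      exact ⟨p.1, hp.1, p.2, hp.2, hpd⟩
    have hsiD : si ∈ D := by
      obtain ⟨a, ha, b, hb, hab⟩ := hsi
      rw [hD, Finset.mem_filter, Finset.mem_image]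
      exact ⟨⟨(a, b), Finset.mem_product.2 ⟨ha, hb⟩, hab⟩, hsipos⟩
    have hne : D.Nonempty := ⟨si, hsiD⟩
    set m := D.min' hne with hm
    have hmD : m ∈ D := D.min'_mem hne
    have hmpos : 0 < m := (Finset.mem_filter.1 hmD).2
    have hmdist : m ∈ distSet n X := hDdist m hmD
    have h0 : (0 : ℝ) ∈ distSet n X := ⟨x₀, hx₀, x₀, hx₀, dist_self x₀⟩
    have hnb : ∀ d ∈ distSet n X, ¬((0:ℝ) < d ∧ d < m) := by
      rintro d ⟨a, ha, b, hb, hab⟩ ⟨hd0, hdm⟩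
      have hdD : d ∈ D := by
        rw [hD, Finset.mem_filter, Finset.mem_image]
        exact ⟨⟨(a, b), Finset.mem_product.2 ⟨ha, hb⟩, hab⟩, hd0⟩
      exact absurd (D.min'_le d hdD) (not_le.2 hdm)
    have hrm : r < m - 0 := hgaps 0 h0 m hmdist hmpos hnb
    have hmsi : m ≤ si := D.min'_le si hsiD
    calc r < m - 0 := hrm
      _ = m := by ring
      _ ≤ si := hmsi
      _ ≤ s := hs1
  -- key: any point of X adjacent to y is X-connected to x₀
  have keyA : ∀ x ∈ X, dist x y ≤ s → vrRel n X s x x₀ := by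
    intro x hx hxy
    have hd : dist x x₀ ∈ distSet n X := ⟨x, hx, x₀, hx₀, rfl⟩
    have hlt1 : dist x x₀ < si1 := by
      calc dist x x₀ ≤ dist x y + dist y x₀ := dist_triangle x y x₀
        _ < s + r := by linarith
        _ < si1 := by linarith
    have hle : dist x x₀ ≤ si := by
      by_contra hc
      exact hconsec _ hd ⟨not_le.1 hc, hlt1⟩
    exact Relation.ReflTransGen.single ⟨hx, hx₀, le_trans hle hs1⟩
  have hXY : X ⊆ Y := Finset.subset_insert y X
  -- chains in Y between X points reduce to chains in X
  have keyC : ∀ a b, vrRel n Y s a b → a ∈ X →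
      ((b = y → vrRel n X s a x₀) ∧ (b ∈ X → vrRel n X s a b)) := by
    intro a b h ha
    induction h with
    | refl => exact ⟨fun hb => absurd (hb ▸ ha) hy, fun _ => Relation.ReflTransGen.refl⟩
    | @tail c b hac hcb ih =>
      obtain ⟨hcY, hbY, hdcb⟩ := hcb
      rcases Finset.mem_insert.1 hcY with hcy | hcX
      · -- c = y
        have hax₀ : vrRel n X s a x₀ := ih.1 hcy
        refine ⟨fun _ => hax₀, fun hbX => ?_⟩
        have : vrRel n X s b x₀ := keyA b hbX (by rw [dist_comm]; exact hcy ▸ hdcb)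
        exact hax₀.trans (vrRel_symm this)
      · have hac' : vrRel n X s a c := ih.2 hcX
        constructor
        · intro hby
          have : vrRel n X s c x₀ := keyA c hcX (hby ▸ hdcb)
          exact hac'.trans this
        · intro hbX
          exact hac'.tail ⟨hcX, hbX, hdcb⟩
  constructor
  · intro x₁ h₁ x₂ h₂
    rw [vrCls_eq_iff (hXY h₁) (hXY h₂), vrCls_eq_iff h₁ h₂]
    exact ⟨fun h => (keyC x₁ x₂ h h₁).2 h₂, fun h => vrRel_mono hXY h⟩
  · intro z hz
    rcases Finset.mem_insert.1 hz with hzy | hzX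
    · refine ⟨x₀, hx₀, ?_⟩
      rw [vrCls_eq_iff hz (hXY hx₀)]
      subst hzy
      exact Relation.ReflTransGen.single
        ⟨Finset.mem_insert_self _ _, hXY hx₀, le_of_lt (lt_trans hyx₀ hrs)⟩
    · exact ⟨z, hzX, rfl⟩
end

section
/- Let Y = X ∪ {y} with d(y,x₀) < r < s₁ ≤ s, where s₁ is the smallest positive pairwise distance of X and r is less than all gaps between consecutive phase change numbers of X. Let s ≤ t be phase change numbers of X with s ≥ s₁. If y ∈ [x]_{s,Y} and [x]_{s,X} = [x]_{t,X} as subsets of X, then [x]_{s,Y} = [x]_{t,Y} as subsets of Y. -/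
open scoped Classical

/-- Projecting chains in `insert y X` to chains in `X`, sending `y` to `x₀`. -/
theorem vr_lift {n : ℕ} {X : Finset (EuclideanSpace ℝ (Fin n))}
    {y x₀ : EuclideanSpace ℝ (Fin n)} (hy : y ∉ X) (hx₀ : x₀ ∈ X) {u : ℝ}
    (H : ∀ c ∈ X, dist y c ≤ u → dist x₀ c ≤ u)
    {a b : EuclideanSpace ℝ (Fin n)}
    (h : vrRel n (insert y X) u a b) :
    vrRel n X u (if a = y then x₀ else a) (if b = y then x₀ else b) := by
  induction h with
  | refl => exact Relation.ReflTransGen.refl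
  | @tail p q _ hstep ih =>
    obtain ⟨hb, hc, hd⟩ := hstep
    refine ih.trans ?_
    rcases Finset.mem_insert.mp hb with rb | rb <;>
      rcases Finset.mem_insert.mp hc with rc | rc
    · rw [if_pos rb, if_pos rc]
    · have hqne : q ≠ y := fun h => hy (h ▸ rc)
      rw [if_pos rb, if_neg hqne]
      exact Relation.ReflTransGen.single ⟨hx₀, rc, H _ rc (rb ▸ hd)⟩
    · have hpne : p ≠ y := fun h => hy (h ▸ rb)
      rw [if_neg hpne, if_pos rc]
      refine Relation.ReflTransGen.single ⟨rb, hx₀, ?_⟩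
      rw [dist_comm]
      refine H _ rb ?_
      rw [dist_comm]
      exact rc ▸ hd
    · have hpne : p ≠ y := fun h => hy (h ▸ rb)
      have hqne : q ≠ y := fun h => hy (h ▸ rc)
      rw [if_neg hpne, if_neg hqne]
      exact Relation.ReflTransGen.single ⟨rb, rc, hd⟩

/-- Corollary 13 of the paper. -/
theorem stmt15 (n : ℕ) (X : Finset (EuclideanSpace ℝ (Fin n)))
    (y x₀ : EuclideanSpace ℝ (Fin n)) (hy : y ∉ X) (hx₀ : x₀ ∈ X)
    (r s t s₁ : ℝ) (hr : 0 < r) (hyx₀ : dist y x₀ < r)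
    (hgaps : ∀ d₁ ∈ distSet n X, ∀ d₂ ∈ distSet n X, d₁ < d₂ →
      (∀ d ∈ distSet n X, ¬(d₁ < d ∧ d < d₂)) → r < d₂ - d₁)
    (hs₁mem : s₁ ∈ distSet n X) (hs₁pos : 0 < s₁)
    (hs₁min : ∀ d ∈ distSet n X, 0 < d → s₁ ≤ d)
    (hrs₁ : r < s₁)
    (hsmem : s ∈ distSet n X) (htmem : t ∈ distSet n X)
    (hs₁s : s₁ ≤ s) (hst : s ≤ t)
    (x : EuclideanSpace ℝ (Fin n)) (hx : x ∈ X)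
    (hyin : y ∈ vrCls n (insert y X) s x)
    (hX : vrCls n X s x = vrCls n X t x) :
    vrCls n (insert y X) s x = vrCls n (insert y X) t x := by
  -- key: any point of X within t of y is within t of x₀
  have H : ∀ c ∈ X, dist y c ≤ t → dist x₀ c ≤ t := by
    intro c hc hyc
    by_contra hgt
    push_neg at hgt
    have hdmem : dist x₀ c ∈ distSet n X := ⟨x₀, hx₀, c, hc, rfl⟩
    have hlt : dist x₀ c < r + t := by
      calc dist x₀ c ≤ dist x₀ y + dist y c := dist_triangle _ _ _
        _ < r + t := by
            have : dist x₀ y < r := by rwa [dist_comm]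
            linarith
    -- take the least phase change number above t
    set S : Finset ℝ := (X ×ˢ X).image fun p => dist p.1 p.2 with hSdef
    have hS : ∀ d, d ∈ distSet n X ↔ d ∈ S := by
      intro d
      simp [distSet, hSdef, Finset.mem_image, Finset.mem_product]
      constructor
      · rintro ⟨a, ha, b, hb, rfl⟩; exact ⟨a, b, ⟨ha, hb⟩, rfl⟩
      · rintro ⟨a, b, ⟨ha, hb⟩, rfl⟩; exact ⟨a, ha, b, hb, rfl⟩
    set T := S.filter (fun d => t < d) with hTdef
    have hTne : T.Nonempty := ⟨dist x₀ c, Finset.mem_filter.mpr ⟨(hS _).mp hdmem, hgt⟩⟩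
    set d₂ := T.min' hTne with hd₂
    have hd₂T : d₂ ∈ T := T.min'_mem hTne
    have hd₂S : d₂ ∈ S := (Finset.mem_filter.mp hd₂T).1
    have htd₂ : t < d₂ := (Finset.mem_filter.mp hd₂T).2
    have hgap : r < d₂ - t := by
      refine hgaps t htmem d₂ ((hS _).mpr hd₂S) htd₂ ?_
      intro d hd ⟨h1, h2⟩
      exact absurd (T.min'_le d (Finset.mem_filter.mpr ⟨(hS _).mp hd, h1⟩))
        (not_le.mpr h2)
    have : d₂ ≤ dist x₀ c := T.min'_le _ (Finset.mem_filter.mpr ⟨(hS _).mp hdmem, hgt⟩)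
    linarith
  ext z
  simp only [vrCls, Set.mem_setOf_eq]
  constructor
  · rintro ⟨hzY, hrel⟩
    exact ⟨hzY, Relation.ReflTransGen.mono (r := vrStep n (insert y X) s) (p := vrStep n (insert y X) t) (fun a b hab => ⟨hab.1, hab.2.1, hab.2.2.trans hst⟩) x z hrel⟩
  · rintro ⟨hzY, hrel⟩
    refine ⟨hzY, ?_⟩
    rcases Finset.mem_insert.mp hzY with rfl | hzX
    · exact hyin.2
    · have hlift := vr_lift hy hx₀ H hrel
      have hxne : x ≠ y := fun h => hy (h ▸ hx)
      have hzne : z ≠ y := fun h => hy (h ▸ hzX)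
      rw [if_neg hxne, if_neg hzne] at hlift
      have hzmem : z ∈ vrCls n X t x := ⟨hzX, hlift⟩
      rw [← hX] at hzmem
      exact Relation.ReflTransGen.mono (r := vrStep n X s) (p := vrStep n (insert y X) s) (fun a b hab =>
        ⟨Finset.mem_insert_of_mem hab.1, Finset.mem_insert_of_mem hab.2.1, hab.2.2⟩) x z hzmem.2
end

section
/- Let Y = X ∪ {y} with d(y,x₀) < r, r less than all gaps between consecutive phase change numbers of X, and s, t phase change numbers of X with s₁ ≤ s ≤ t. If x ∈ X, x ≠ y, y ∈ [x]_{s,Y}, and [x]_{s,Y} = [x]_{t,Y} as subsets of Y, then [x]_{s,X} = [x]_{t,X} as subsets of X. -/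
open scoped Classical

lemma distSet_finite (n : ℕ) (X : Finset (EuclideanSpace ℝ (Fin n))) :
    (distSet n X).Finite := by
  have h : distSet n X = Set.image2 dist (X : Set (EuclideanSpace ℝ (Fin n))) (X : Set _) := by
    ext d
    simp [distSet, Set.image2]
  rw [h]
  exact Set.Finite.image2 _ X.finite_toSet X.finite_toSet

/-- If all gaps between consecutive distances exceed `r`, then a distance `d < u + r`
with `u` also a distance forces `d ≤ u`. -/
lemma key_lemma (n : ℕ) (X : Finset (EuclideanSpace ℝ (Fin n))) (r : ℝ)
    (hgaps : ∀ d₁ ∈ distSet n X, ∀ d₂ ∈ distSet n X, d₁ < d₂ →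
      (∀ d ∈ distSet n X, ¬(d₁ < d ∧ d < d₂)) → r < d₂ - d₁)
    (u d : ℝ) (hu : u ∈ distSet n X) (hd : d ∈ distSet n X)
    (h : d < u + r) : d ≤ u := by
  by_contra h'
  push_neg at h'
  set S : Set ℝ := {e ∈ distSet n X | u < e ∧ e ≤ d} with hS
  have hfin : S.Finite := (distSet_finite n X).subset (fun e he => he.1)
  have hne : S.Nonempty := ⟨d, hd, h', le_refl d⟩
  obtain ⟨d', hd'S, hd'min⟩ := Set.exists_min_image S id hfin hne
  have hgap : r < d' - u := by
    refine hgaps u hu d' hd'S.1 hd'S.2.1 ?_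
    intro e he ⟨he1, he2⟩
    have : e ∈ S := ⟨he, he1, le_trans he2.le hd'S.2.2⟩
    exact absurd (hd'min e this) (by simpa using not_le.mpr he2)
  have : d' ≤ d := hd'S.2.2
  linarith

/-- Restricting a class in `insert y X` to `X` gives the class in `X`. -/
lemma cls_restrict (n : ℕ) (X : Finset (EuclideanSpace ℝ (Fin n)))
    (y x₀ : EuclideanSpace ℝ (Fin n)) (hy : y ∉ X) (hx₀ : x₀ ∈ X)
    (r u : ℝ) (hyx₀ : dist y x₀ < r)
    (hkey : ∀ d ∈ distSet n X, d < u + r → d ≤ u)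
    (hux₀ : dist y x₀ ≤ u)
    (x : EuclideanSpace ℝ (Fin n)) (hx : x ∈ X) :
    vrCls n X u x = vrCls n (insert y X) u x ∩ (X : Set (EuclideanSpace ℝ (Fin n))) := by
  have hxny : x ≠ y := fun h => hy (h ▸ hx)
  -- projection map
  set f : EuclideanSpace ℝ (Fin n) → EuclideanSpace ℝ (Fin n) :=
    fun a => if a = y then x₀ else a with hf
  have hstep : ∀ b c, vrStep n (insert y X) u b c → vrRel n X u (f b) (f c) := by
    intro b c ⟨hb, hc, hdist⟩
    by_cases hby : b = y <;> by_cases hcy : c = y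
    · rw [hby, hcy]; exact Relation.ReflTransGen.refl
    · have hcX : c ∈ X := (Finset.mem_insert.mp hc).resolve_left hcy
      have hle : dist x₀ c ≤ u := by
        refine hkey _ ⟨x₀, hx₀, c, hcX, rfl⟩ ?_
        have h1 := dist_triangle x₀ b c
        have h2 : dist x₀ b = dist y x₀ := by rw [hby, dist_comm]
        linarith
      have : vrStep n X u x₀ c := ⟨hx₀, hcX, hle⟩
      simpa [hf, hby, hcy, vrRel] using Relation.ReflTransGen.single this
    · have hbX : b ∈ X := (Finset.mem_insert.mp hb).resolve_left hby
      have hle : dist b x₀ ≤ u := by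
        refine hkey _ ⟨b, hbX, x₀, hx₀, rfl⟩ ?_
        have h1 := dist_triangle b c x₀
        have h2 : dist c x₀ = dist y x₀ := by rw [hcy]
        linarith
      have : vrStep n X u b x₀ := ⟨hbX, hx₀, hle⟩
      simpa [hf, hby, hcy, vrRel] using Relation.ReflTransGen.single this
    · have hbX : b ∈ X := (Finset.mem_insert.mp hb).resolve_left hby
      have hcX : c ∈ X := (Finset.mem_insert.mp hc).resolve_left hcy
      have : vrStep n X u b c := ⟨hbX, hcX, hdist⟩
      simpa [hf, hby, hcy, vrRel] using Relation.ReflTransGen.single this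
  have main : ∀ z, vrRel n (insert y X) u x z → vrRel n X u x (f z) := by
    intro z hz
    induction hz with
    | refl =>
      simp only [hf, if_neg hxny]
      exact Relation.ReflTransGen.refl
    | tail _ step ih => exact ih.trans (hstep _ _ step)
  ext z
  constructor
  · rintro ⟨hzX, hrel⟩
    refine ⟨⟨Finset.mem_insert_of_mem hzX, ?_⟩, hzX⟩
    exact Relation.ReflTransGen.mono (r := vrStep n X u) (p := vrStep n (insert y X) u)
      (fun a b (h : vrStep n X u a b) =>
      (⟨Finset.mem_insert_of_mem h.1, Finset.mem_insert_of_mem h.2.1, h.2.2⟩ :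
        vrStep n (insert y X) u a b)) _ _ hrel
  · rintro ⟨⟨hzY, hrel⟩, hzX⟩
    have hzny : z ≠ y := fun h => hy (h ▸ hzX)
    have := main z hrel
    rw [hf] at this
    simp only [if_neg hzny] at this
    exact ⟨hzX, this⟩

/-- Corollary 14 of the paper. -/
theorem stmt16 (n : ℕ) (X : Finset (EuclideanSpace ℝ (Fin n)))
    (y x₀ : EuclideanSpace ℝ (Fin n)) (hy : y ∉ X) (hx₀ : x₀ ∈ X)
    (r s t s₁ : ℝ) (hr : 0 < r) (hyx₀ : dist y x₀ < r)
    (hgaps : ∀ d₁ ∈ distSet n X, ∀ d₂ ∈ distSet n X, d₁ < d₂ →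
      (∀ d ∈ distSet n X, ¬(d₁ < d ∧ d < d₂)) → r < d₂ - d₁)
    (hs₁mem : s₁ ∈ distSet n X) (hs₁pos : 0 < s₁)
    (hs₁min : ∀ d ∈ distSet n X, 0 < d → s₁ ≤ d)
    (hsmem : s ∈ distSet n X) (htmem : t ∈ distSet n X)
    (hs₁s : s₁ ≤ s) (hst : s ≤ t)
    (x : EuclideanSpace ℝ (Fin n)) (hx : x ∈ X) (hxy : x ≠ y)
    (hyin : y ∈ vrCls n (insert y X) s x)
    (hY : vrCls n (insert y X) s x = vrCls n (insert y X) t x) :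
    vrCls n X s x = vrCls n X t x := by
  -- r < s₁ ≤ s ≤ t
  have h0 : (0 : ℝ) ∈ distSet n X := ⟨x₀, hx₀, x₀, hx₀, dist_self x₀⟩
  have hrs₁ : r < s₁ := by
    have := hgaps 0 h0 s₁ hs₁mem hs₁pos (fun d hd ⟨h1, h2⟩ =>
      absurd (hs₁min d hd h1) (not_le.mpr h2))
    linarith
  have hys : dist y x₀ ≤ s := by linarith
  have hyt : dist y x₀ ≤ t := by linarith
  have hres_s := cls_restrict n X y x₀ hy hx₀ r s hyx₀
    (fun d hd hlt => key_lemma n X r hgaps s d hsmem hd hlt) hys x hx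
  have hres_t := cls_restrict n X y x₀ hy hx₀ r t hyx₀
    (fun d hd hlt => key_lemma n X r hgaps t d htmem hd hlt) hyt x hx
  rw [hres_s, hres_t, hY]
end
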